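/- Let T be a noetherian, weakly approximable triangulated category, with a t-structure (T^{≤0}, T^{≥0}) in the preferred equivalence class and noetherianness constant N. Then for any object X ∈ T^-_c ∩ T^{≤0} there exists an inverse system B_1 ← B_2 ← ⋯ in T^b_c ∩ T^{≤0}, Cauchy in the sense that for each i the truncation functor (−)^{≥ −i} eventually takes the transition maps to isomorphisms, with X ≅ holim B_*. -/

import Mathlib

/-!
Shifting the noetherian triangle of `X⟦-n(N+1)⟧` back gives triangles `Aₙ → X → Bₙ` with
`Aₙ ∈ T^{≤ -n(N+1)}` and `Bₙ ∈ T^b_c ∩ T^{≥ -N-n(N+1)}`. As `Hom(Aₙ₊₁, Bₙ) = 0`, the maps `X → Bₙ`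
factor through each other and form an inverse system. If `Hom(W, T^{≤ b}) = 0` for some `b`, as for
every shift of the compact generator `G`, then `Hom(W, X) → Hom(W, Bₙ)` is bijective for large `n`:
the system `Hom(W, B_*)` is eventually constant with limit `Hom(W, X)` and vanishing `lim¹`, so the
comparison map from `X` to the homotopy limit is bijective on `Hom(W, -)`, hence an isomorphism.
Dually, `Hom(Bₙ, Y) → Hom(X, Y)` is bijective for `Y ∈ T^{≥ 1-i}` and `n ≥ i`, which puts the cones
of the transition maps into `T^{≤ -i}`.
-/

namespace Stmt13

open CategoryTheory Category Limits Pretriangulated ZeroObject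

universe v u

variable {T : Type u} [Category.{v} T] [Preadditive T] [HasZeroObject T]
  [HasShift T ℤ] [∀ n : ℤ, (CategoryTheory.shiftFunctor T n).Additive] [Pretriangulated T]
  [HasCoproducts.{v} T] [HasProducts.{v} T]

/-- The canonical map `⨁ᵢ Hom(X, fᵢ) ⟶ Hom(X, ∐ f)`. -/
noncomputable def canMap {ι : Type v} [DecidableEq ι] (f : ι → T) (X : T) :
    (DirectSum ι fun i : ι => (X ⟶ f i)) →+ (X ⟶ ∐ f) :=
  DirectSum.toAddMonoid fun i =>
    AddMonoidHom.mk' (fun (h : X ⟶ f i) => h ≫ Sigma.ι f i)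
      (fun _ _ => Preadditive.add_comp _ _ _ _ _ _)

/-- An object `X` is compact if `Hom(X, −)` commutes with coproducts. -/
def IsCompactObject (X : T) : Prop :=
  ∀ {ι : Type v} [DecidableEq ι] (f : ι → T), Function.Bijective (canMap f X)

/-- `G` generates `T`: an object with no nonzero maps from any shift of `G` is zero. -/
def IsGenerator (G : T) : Prop :=
  ∀ X : T, (∀ n : ℤ, ∀ f : G⟦n⟧ ⟶ X, f = 0) → IsZero X

/-- A t-structure on `T`, given by the sequences of subcategories
`le n = T^{≤ n}` and `ge n = T^{≥ n}`. -/
structure TStruct (T : Type u) [Category.{v} T] [Preadditive T] [HasZeroObject T]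
    [HasShift T ℤ] [∀ n : ℤ, (CategoryTheory.shiftFunctor T n).Additive]
    [Pretriangulated T] where
  le : ℤ → Set T
  ge : ℤ → Set T
  le_iso : ∀ n, ∀ X Y : T, (X ≅ Y) → X ∈ le n → Y ∈ le n
  ge_iso : ∀ n, ∀ X Y : T, (X ≅ Y) → X ∈ ge n → Y ∈ ge n
  le_shift : ∀ (n : ℤ) (X : T), X ∈ le n ↔ X⟦(1 : ℤ)⟧ ∈ le (n - 1)
  ge_shift : ∀ (n : ℤ) (X : T), X ∈ ge n ↔ X⟦(1 : ℤ)⟧ ∈ ge (n - 1)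
  le_mono : ∀ n : ℤ, le n ⊆ le (n + 1)
  ge_anti : ∀ n : ℤ, ge (n + 1) ⊆ ge n
  hom_zero : ∀ X ∈ le 0, ∀ Y ∈ ge 1, ∀ f : X ⟶ Y, f = 0
  exists_triangle : ∀ X : T, ∃ (A B : T) (f : A ⟶ X) (g : X ⟶ B) (h : B ⟶ A⟦(1 : ℤ)⟧),
    A ∈ le 0 ∧ B ∈ ge 1 ∧ Triangle.mk f g h ∈ (distTriang T)

/-- A cocomplete pre-aisle: closed under isomorphisms, zero, suspension, extensions,
direct summands and small coproducts. -/
def IsCocompletePreAisle (P : Set T) : Prop :=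
  (∀ X Y : T, (X ≅ Y) → X ∈ P → Y ∈ P) ∧ ((0 : T) ∈ P) ∧
  (∀ X ∈ P, X⟦(1 : ℤ)⟧ ∈ P) ∧
  (∀ Tr ∈ (distTriang T), Tr.obj₁ ∈ P → Tr.obj₃ ∈ P → Tr.obj₂ ∈ P) ∧
  (∀ (X Y : T) (r : X ⟶ Y) (s : Y ⟶ X), s ≫ r = 𝟙 Y → X ∈ P → Y ∈ P) ∧
  (∀ {ι : Type v} (f : ι → T), (∀ i, f i ∈ P) → (∐ f) ∈ P)

/-- `overline{⟨G⟩}^{(−∞,−n]}`: the smallest cocomplete pre-aisle containing `G⟦m⟧` for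
all `m ≥ n`. -/
def aisleGen (G : T) (n : ℤ) : Set T :=
  ⋂₀ {P | IsCocompletePreAisle P ∧ ∀ m : ℤ, n ≤ m → G⟦m⟧ ∈ P}

/-- A t-structure is in the preferred equivalence class if it is equivalent to the
t-structure generated by a compact generator `G`, i.e. there is `A > 0` with
`⟨G⟩-aisle shifted by A ⊆ T^{≤0} ⊆ ⟨G⟩-aisle shifted by −A`. -/
def InPreferredClass (t : TStruct T) : Prop :=
  ∃ G : T, IsCompactObject G ∧ IsGenerator G ∧
    ∃ A : ℤ, 0 < A ∧ aisleGen G A ⊆ t.le 0 ∧ t.le 0 ⊆ aisleGen G (-A)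

/-- The subcategory `T^-_c`: objects admitting, for every `n`, a triangle
`E ⟶ X ⟶ D` with `E` compact and `D ∈ T^{≤ n}`. -/
def Tminus (t : TStruct T) : Set T :=
  {X | ∀ n : ℤ, ∃ (E D : T) (f : E ⟶ X) (g : X ⟶ D) (h : D ⟶ E⟦(1 : ℤ)⟧),
    IsCompactObject E ∧ D ∈ t.le n ∧ Triangle.mk f g h ∈ (distTriang T)}

/-- The subcategory `T^b_c = T^-_c ∩ T^b`. -/
def Tbc (t : TStruct T) : Set T :=
  Tminus t ∩ {X | ∃ m : ℤ, X ∈ t.ge m}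

/-- `T` is noetherian with witness `N` (relative to the t-structure `t`): every
`X ∈ T^-_c` admits a triangle `A ⟶ X ⟶ B` with `A ∈ T^-_c ∩ T^{≤0}` and
`B ∈ T^b_c ∩ T^{≥ −N}`. -/
def NoetherianWitness (t : TStruct T) (N : ℕ) : Prop :=
  ∀ X ∈ Tminus t, ∃ (A B : T) (f : A ⟶ X) (g : X ⟶ B) (h : B ⟶ A⟦(1 : ℤ)⟧),
    A ∈ Tminus t ∩ t.le 0 ∧ B ∈ Tbc t ∩ t.ge (-(N : ℤ)) ∧
    Triangle.mk f g h ∈ (distTriang T)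

/-- `T` is weakly approximable (relative to the t-structure `t`). -/
def WeaklyApproximable (t : TStruct T) : Prop :=
  ∃ (G : T) (A : ℕ), 0 < A ∧ IsCompactObject G ∧ IsGenerator G ∧
    G ∈ t.le (A : ℤ) ∧ (∀ X ∈ t.le (-(A : ℤ)), ∀ f : G ⟶ X, f = 0) ∧
    ∀ X ∈ t.le 0, ∃ (E D : T) (f : E ⟶ X) (g : X ⟶ D) (h : D ⟶ E⟦(1 : ℤ)⟧),
      E ∈ aisleGen G (-(A : ℤ)) ∧ D ∈ t.le (-1) ∧
      Triangle.mk f g h ∈ (distTriang T)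


/-- The map `1 − shift : ∏ B_i ⟶ ∏ B_i` of an inverse system `(B, p)`. -/
noncomputable def oneMinusShiftProd (B : ℕ → T) (p : ∀ i : ℕ, B (i + 1) ⟶ B i) :
    (∏ᶜ B) ⟶ (∏ᶜ B) :=
  𝟙 _ - Pi.lift fun i => Pi.π B (i + 1) ≫ p i

section InverseSystem

variable {A : ℕ → Type*}

theorem exists_sub_map_succ_eq [∀ i, AddCommGroup (A i)] (t : ∀ i, A (i + 1) → A i)
    (ht : ∀ᶠ i in Filter.atTop, Function.Bijective (t i)) (y : ∀ i, A i) :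
    ∃ x : ∀ i, A i, ∀ i, x i - t i (x (i + 1)) = y i := by
  obtain ⟨I, hI⟩ := Filter.eventually_atTop.1 ht
  clear ht
  induction I generalizing A with
  | zero =>
    let e i := Equiv.ofBijective (t i) (hI i (Nat.zero_le i))
    let x : ∀ i, A i := fun i => Nat.rec (motive := A) 0 (fun i v => (e i).symm (v - y i)) i
    refine ⟨x, fun i => ?_⟩
    change x i - e i ((e i).symm (x i - y i)) = y i
    rw [Equiv.apply_symm_apply, sub_sub_cancel]
  | succ I ih =>
    obtain ⟨x, hx⟩ := ih (fun i => t (i + 1)) (fun i => y (i + 1)) fun i hi => hI (i + 1) (by omega)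
    exact ⟨fun | 0 => y 0 + t 0 (x 0) | i + 1 => x i,
      fun | 0 => add_sub_cancel_right _ _ | i + 1 => hx i⟩

variable {X : Type*} (t : ∀ i, A (i + 1) → A i) (s : ∀ i, X → A i)

theorem eventually_bijective_of_cone (hs : ∀ i x, t i (s (i + 1) x) = s i x)
    (hbij : ∀ᶠ i in Filter.atTop, Function.Bijective (s i)) :
    ∀ᶠ i in Filter.atTop, Function.Bijective (t i) := by
  filter_upwards [hbij, (Filter.tendsto_add_atTop_nat 1).eventually hbij] with i hi hi₁
  exact (Function.Bijective.of_comp_iff _ hi₁).1 (by convert hi using 1; funext x; exact hs i x)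

theorem exists_forall_eq_of_cone (hs : ∀ i x, t i (s (i + 1) x) = s i x)
    (hbij : ∀ᶠ i in Filter.atTop, Function.Bijective (s i)) (y : ∀ i, A i)
    (hy : ∀ i, t i (y (i + 1)) = y i) : ∃ x, ∀ i, s i x = y i := by
  obtain ⟨I, hI⟩ := Filter.eventually_atTop.1 hbij
  obtain ⟨x, hx⟩ := (hI I le_rfl).2 (y I)
  have above : ∀ k, s (I + k) x = y (I + k) := by
    intro k
    induction k with
    | zero => exact hx
    | succ k ih =>
      obtain ⟨x', hx'⟩ := (hI (I + k + 1) (by omega)).2 (y (I + k + 1))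
      have : x' = x := (hI (I + k) (by omega)).1 (by rw [← hs, hx', hy, ih])
      rwa [← this]
  have below : ∀ k i, s (i + k) x = y (i + k) → s i x = y i := by
    intro k
    induction k with
    | zero => exact fun i h => h
    | succ k ih => exact fun i h => ih i (by rw [← hs, ← hy]; exact congrArg _ h)
  exact ⟨x, fun i => below I i (by rw [Nat.add_comm]; exact above i)⟩

end InverseSystem

section Pretriangulated

variable {C : Type u} [Category.{v} C] [Preadditive C] [HasZeroObject C] [HasShift C ℤ]
  [∀ n : ℤ, (shiftFunctor C n).Additive] [Pretriangulated C]

theorem exists_distTriang_of_iso₂ {Tr : Triangle C} (hTr : Tr ∈ distTriang C) {X : C}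
    (e : Tr.obj₂ ≅ X) :
    ∃ (f : Tr.obj₁ ⟶ X) (g : X ⟶ Tr.obj₃), Triangle.mk f g Tr.mor₃ ∈ distTriang C :=
  ⟨Tr.mor₁ ≫ e.hom, e.inv ≫ Tr.mor₂, isomorphic_distinguished _ hTr _
    (Triangle.isoMk _ _ (Iso.refl _) e.symm (Iso.refl _) (by simp [Triangle.mk])
      (by simp [Triangle.mk]) (by simp [Triangle.mk]))⟩

theorem bijective_comp_mor₂ {Tr : Triangle C} (hTr : Tr ∈ distTriang C) {W : C}
    (h₁ : ∀ u : W ⟶ Tr.obj₁, u = 0) (h₃ : ∀ u : W ⟶ Tr.obj₁⟦(1 : ℤ)⟧, u = 0) :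
    Function.Bijective (fun x : W ⟶ Tr.obj₂ => x ≫ Tr.mor₂) := by
  refine ⟨fun x y hxy => ?_, fun u => ?_⟩
  · obtain ⟨a, ha⟩ := Tr.coyoneda_exact₂ hTr (x - y) (by simpa [sub_eq_zero] using hxy)
    rw [← sub_eq_zero, ha, h₁ a, zero_comp]
  · obtain ⟨x, hx⟩ := Tr.coyoneda_exact₃ hTr u (h₃ _)
    exact ⟨x, hx.symm⟩

theorem bijective_mor₂_comp {Tr : Triangle C} (hTr : Tr ∈ distTriang C) {Y : C}
    (h₁ : ∀ u : Tr.obj₁ ⟶ Y, u = 0) (h₃ : ∀ u : Tr.obj₁⟦(1 : ℤ)⟧ ⟶ Y, u = 0) :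
    Function.Bijective (fun y : Tr.obj₃ ⟶ Y => Tr.mor₂ ≫ y) := by
  refine ⟨fun y y' hyy' => ?_, fun u => ?_⟩
  · obtain ⟨a, ha⟩ := Tr.yoneda_exact₃ hTr (y - y') (by simpa [sub_eq_zero] using hyy')
    rw [← sub_eq_zero, ha, h₃ a, comp_zero]
  · obtain ⟨y, hy⟩ := Tr.yoneda_exact₂ hTr u (h₁ _)
    exact ⟨y, hy.symm⟩

theorem eq_zero_of_comp_mor₁_eq_zero {Tr : Triangle C} (hTr : Tr ∈ distTriang C) {W : C}
    (hsurj : Function.Surjective (fun z : W⟦(1 : ℤ)⟧ ⟶ Tr.obj₂ => z ≫ Tr.mor₂))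
    (v : W ⟶ Tr.obj₁) (hv : v ≫ Tr.mor₁ = 0) : v = 0 := by
  obtain ⟨y, hy⟩ := Tr.coyoneda_exact₁ hTr (v⟦(1 : ℤ)⟧')
    (by rw [← Functor.map_comp, hv, Functor.map_zero])
  obtain ⟨z, rfl⟩ := hsurj y
  apply (shiftFunctor C (1 : ℤ)).map_injective
  rw [hy, assoc, comp_distTriang_mor_zero₂₃ _ hTr, comp_zero, Functor.map_zero]

theorem eq_zero_of_bijective_comp_mor₁ {Tr : Triangle C} (hTr : Tr ∈ distTriang C) {W : C}
    (hsurj : Function.Surjective (fun x : W⟦(1 : ℤ)⟧ ⟶ Tr.obj₁ => x ≫ Tr.mor₁))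
    (hinj : Function.Injective (fun x : W ⟶ Tr.obj₁ => x ≫ Tr.mor₁))
    (q : W⟦(1 : ℤ)⟧ ⟶ Tr.obj₃) : q = 0 := by
  have hq : q ≫ Tr.mor₃ = 0 := by
    obtain ⟨r, hr⟩ := (shiftFunctor C (1 : ℤ)).map_surjective (q ≫ Tr.mor₃)
    have : r = 0 := hinj (by
      apply (shiftFunctor C (1 : ℤ)).map_injective
      simp [hr, comp_distTriang_mor_zero₃₁ _ hTr])
    rw [← hr, this, Functor.map_zero]
  obtain ⟨g, rfl⟩ := Tr.coyoneda_exact₃ hTr q hq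
  obtain ⟨x, rfl⟩ := hsurj g
  simp [comp_distTriang_mor_zero₁₂ _ hTr]

theorem eq_zero_of_bijective_mor₁_comp {Tr : Triangle C} (hTr : Tr ∈ distTriang C) {Y : C}
    (hinj : Function.Injective (fun y : Tr.obj₂ ⟶ Y⟦(1 : ℤ)⟧ => Tr.mor₁ ≫ y))
    (hsurj : Function.Surjective (fun y : Tr.obj₂ ⟶ Y => Tr.mor₁ ≫ y))
    (ψ : Tr.obj₃ ⟶ Y⟦(1 : ℤ)⟧) : ψ = 0 := by
  have hψ : Tr.mor₂ ≫ ψ = 0 := hinj (by simp [comp_distTriang_mor_zero₁₂_assoc _ hTr])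
  obtain ⟨χ, rfl⟩ := Tr.yoneda_exact₃ hTr ψ hψ
  obtain ⟨θ', rfl⟩ := (shiftFunctor C (1 : ℤ)).map_surjective χ
  obtain ⟨θ, rfl⟩ := hsurj θ'
  simp [comp_distTriang_mor_zero₃₁_assoc _ hTr]

theorem isIso_of_bijective_comp {X L : C} (φ : X ⟶ L) (P : C → Prop)
    (hP : ∀ W, P W → ∀ k : ℤ, P (W⟦k⟧))
    (hdetect : ∀ Y, (∀ W, P W → ∀ g : W ⟶ Y, g = 0) → IsZero Y)
    (hφ : ∀ W, P W → Function.Bijective (fun x : W ⟶ X => x ≫ φ)) : IsIso φ := by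
  obtain ⟨Z, π, ω, hT⟩ := distinguished_cocone_triangle φ
  refine (Triangle.isZero₃_iff_isIso₁ _ hT).1 (hdetect Z fun W hW q => ?_)
  let e : (W⟦(-1 : ℤ)⟧)⟦(1 : ℤ)⟧ ≅ W := (shiftFunctorCompIsoId C (-1) 1 (by norm_num)).app W
  have hW' := hP W hW (-1)
  have : e.hom ≫ q = 0 :=
    eq_zero_of_bijective_comp_mor₁ hT (hφ _ (hP _ hW' 1)).2 (hφ _ hW').1 (e.hom ≫ q)
  rw [← e.inv_hom_id_assoc q, this, comp_zero]

end Pretriangulated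

section ProductOfInverseSystem

variable {C : Type u} [Category.{v} C] [Preadditive C] [HasProducts.{v} C]
  {B : ℕ → C} {p : ∀ n, B (n + 1) ⟶ B n} {W : C}

theorem comp_oneMinusShiftProd_π (u : W ⟶ ∏ᶜ B) (n : ℕ) :
    (u ≫ oneMinusShiftProd B p) ≫ Pi.π B n = u ≫ Pi.π B n - (u ≫ Pi.π B (n + 1)) ≫ p n := by
  simp [oneMinusShiftProd]

theorem comp_oneMinusShiftProd_eq_zero_iff (u : W ⟶ ∏ᶜ B) :
    u ≫ oneMinusShiftProd B p = 0 ↔ ∀ n, (u ≫ Pi.π B (n + 1)) ≫ p n = u ≫ Pi.π B n := by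
  refine ⟨fun h n => ?_, fun h => Pi.hom_ext _ _ fun n => ?_⟩
  · have := comp_oneMinusShiftProd_π (p := p) u n
    rw [h, zero_comp, eq_comm, sub_eq_zero] at this
    exact this.symm
  · rw [comp_oneMinusShiftProd_π, h, sub_self, zero_comp]

theorem surjective_comp_oneMinusShiftProd
    (hp : ∀ᶠ n in Filter.atTop, Function.Bijective (fun x : W ⟶ B (n + 1) => x ≫ p n)) :
    Function.Surjective (fun u : W ⟶ ∏ᶜ B => u ≫ oneMinusShiftProd B p) := by
  intro y
  obtain ⟨x, hx⟩ := exists_sub_map_succ_eq (A := fun n => W ⟶ B n) (fun n x => x ≫ p n) hp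
    (fun n => y ≫ Pi.π B n)
  refine ⟨Pi.lift x, Pi.hom_ext _ _ fun n => ?_⟩
  rw [comp_oneMinusShiftProd_π, Pi.lift_π, Pi.lift_π, hx]

end ProductOfInverseSystem

section HomotopyLimit

variable {C : Type u} [Category.{v} C] [Preadditive C] [HasZeroObject C] [HasShift C ℤ]
  [∀ n : ℤ, (shiftFunctor C n).Additive] [Pretriangulated C] [HasProducts.{v} C]
  {B : ℕ → C} {p : ∀ n, B (n + 1) ⟶ B n} {X : C} {c : ∀ n, X ⟶ B n}

theorem bijective_comp_of_pi_lift_eq {L : C} {α : L ⟶ ∏ᶜ B} {δ : ∏ᶜ B ⟶ L⟦(1 : ℤ)⟧}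
    (hT : Triangle.mk α (oneMinusShiftProd B p) δ ∈ distTriang C)
    (hc : ∀ n, c (n + 1) ≫ p n = c n) {φ : X ⟶ L} (hφ : Pi.lift c = φ ≫ α) {W : C}
    (hW : ∀ᶠ n in Filter.atTop, Function.Bijective (fun x : W ⟶ X => x ≫ c n))
    (hW₁ : ∀ᶠ n in Filter.atTop, Function.Bijective (fun x : W⟦(1 : ℤ)⟧ ⟶ X => x ≫ c n)) :
    Function.Bijective (fun x : W ⟶ X => x ≫ φ) := by
  have hφc : ∀ n, φ ≫ α ≫ Pi.π B n = c n := fun n => by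
    rw [← assoc, ← hφ, Pi.lift_π]
  have hαβ : α ≫ oneMinusShiftProd B p = 0 := comp_distTriang_mor_zero₁₂ _ hT
  obtain ⟨I, hI⟩ := hW.exists
  refine ⟨fun x y hxy => hI.1 ?_, fun u => ?_⟩
  · simp only at hxy ⊢
    rw [← hφc, ← assoc, hxy, assoc]
  · have hu : ∀ n, (u ≫ α ≫ Pi.π B (n + 1)) ≫ p n = u ≫ α ≫ Pi.π B n := by
      simpa using (comp_oneMinusShiftProd_eq_zero_iff (u ≫ α)).1 (by rw [assoc, hαβ, comp_zero])
    obtain ⟨x, hx⟩ := exists_forall_eq_of_cone (A := fun n => W ⟶ B n)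
      (fun n y => y ≫ p n) (fun n x => x ≫ c n) (fun n x => by simp [hc]) hW
      (fun n => u ≫ α ≫ Pi.π B n) hu
    have hsurj := surjective_comp_oneMinusShiftProd
      (eventually_bijective_of_cone (fun n (y : W⟦(1 : ℤ)⟧ ⟶ B (n + 1)) => y ≫ p n)
        (fun n x => x ≫ c n) (fun n x => by simp [hc]) hW₁)
    have h0 : (u - x ≫ φ) ≫ α = 0 := Pi.hom_ext _ _ fun n => by
      simp only [Preadditive.sub_comp, assoc, hφc, hx, sub_self, zero_comp]
    exact ⟨x, (sub_eq_zero.1 (eq_zero_of_comp_mor₁_eq_zero hT hsurj _ h0)).symm⟩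

theorem exists_distTriang_pi_lift_oneMinusShiftProd (hc : ∀ n, c (n + 1) ≫ p n = c n)
    (P : C → Prop) (hP : ∀ W, P W → ∀ k : ℤ, P (W⟦k⟧))
    (hdetect : ∀ Y, (∀ W, P W → ∀ g : W ⟶ Y, g = 0) → IsZero Y)
    (hPc : ∀ W, P W → ∀ᶠ n in Filter.atTop, Function.Bijective (fun x : W ⟶ X => x ≫ c n)) :
    ∃ δ, Triangle.mk (Pi.lift c) (oneMinusShiftProd B p) δ ∈ distTriang C := by
  obtain ⟨L, α, δ, hT⟩ := distinguished_cocone_triangle₁ (oneMinusShiftProd B p)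
  obtain ⟨φ, hφ⟩ : ∃ φ : X ⟶ L, Pi.lift c = φ ≫ α := Triangle.coyoneda_exact₂ _ hT (Pi.lift c)
    ((comp_oneMinusShiftProd_eq_zero_iff _).2 fun n => by simp [hc])
  have : IsIso φ := isIso_of_bijective_comp φ P hP hdetect fun W hW =>
    bijective_comp_of_pi_lift_eq hT hc hφ (hPc W hW) (hPc _ (hP W hW 1))
  refine ⟨δ ≫ inv (φ⟦(1 : ℤ)⟧'), isomorphic_distinguished _ hT _
    (Triangle.isoMk _ _ (asIso φ : X ≅ L) (Iso.refl _) (Iso.refl _) ?_ ?_ ?_)⟩ <;>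
    simp [Triangle.mk, hφ]

end HomotopyLimit

theorem shift_mem_iff {C : Type u} [Category.{v} C] [HasShift C ℤ] {P : ℤ → Set C}
    (hiso : ∀ n X Y, (X ≅ Y) → X ∈ P n → Y ∈ P n)
    (hshift : ∀ n X, X ∈ P n ↔ X⟦(1 : ℤ)⟧ ∈ P (n - 1)) (X : C) (k n : ℤ) :
    X⟦k⟧ ∈ P (n - k) ↔ X ∈ P n := by
  have iso_iff {Y Z : C} (e : Y ≅ Z) (m : ℤ) : Y ∈ P m ↔ Z ∈ P m :=
    ⟨hiso m Y Z e, hiso m Z Y e.symm⟩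
  have step (a b m : ℤ) (h : a + 1 = b) : X⟦b⟧ ∈ P (m - 1) ↔ X⟦a⟧ ∈ P m :=
    (iso_iff ((shiftFunctorAdd' C a 1 b h).app X) _).trans (hshift m _).symm
  induction k using Int.induction_on generalizing n with
  | zero => simpa using iso_iff ((shiftFunctorZero C ℤ).app X) n
  | succ k ih =>
    rw [show n - (k + 1) = n - k - 1 by ring]
    exact (step _ _ _ rfl).trans (ih n)
  | pred k ih =>
    have := step (-k - 1) (-k) (n - (-k - 1)) (by ring)
    rw [show n - (-k - 1) - 1 = n - -k by ring] at this
    exact this.symm.trans (ih n)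

section TStructure

variable {C : Type u} [Category.{v} C] [Preadditive C] [HasZeroObject C] [HasShift C ℤ]
  [∀ n : ℤ, (shiftFunctor C n).Additive] [Pretriangulated C]

namespace TStruct

variable (t : TStruct C)

theorem le_monotone : Monotone t.le := monotone_int_of_le_succ t.le_mono

theorem ge_antitone : Antitone t.ge := antitone_int_of_succ_le t.ge_anti

variable {t}

theorem shift_mem_le {X : C} {n : ℤ} (hX : X ∈ t.le n) (k : ℤ) {m : ℤ} (h : n - k ≤ m) :
    X⟦k⟧ ∈ t.le m :=
  t.le_monotone h ((shift_mem_iff t.le_iso t.le_shift X k n).2 hX)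

theorem shift_mem_ge {X : C} {n : ℤ} (hX : X ∈ t.ge n) (k : ℤ) {m : ℤ} (h : m ≤ n - k) :
    X⟦k⟧ ∈ t.ge m :=
  t.ge_antitone h ((shift_mem_iff t.ge_iso t.ge_shift X k n).2 hX)

theorem hom_eq_zero {X Y : C} {a b : ℤ} (hX : X ∈ t.le a) (hY : Y ∈ t.ge b) (hab : a < b)
    (f : X ⟶ Y) : f = 0 :=
  (shiftFunctor C a).map_injective (by
    rw [Functor.map_zero]
    exact t.hom_zero _ (shift_mem_le hX a (by simp)) _ (shift_mem_ge hY a (by omega)) _)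

variable (t) in
theorem exists_distTriang (X : C) (n : ℤ) :
    ∃ (A B : C) (f : A ⟶ X) (g : X ⟶ B) (h : B ⟶ A⟦(1 : ℤ)⟧),
      A ∈ t.le n ∧ B ∈ t.ge (n + 1) ∧ Triangle.mk f g h ∈ distTriang C := by
  obtain ⟨A, B, f, g, h, hA, hB, hT⟩ := t.exists_triangle (X⟦n⟧)
  obtain ⟨f', g', hT'⟩ := exists_distTriang_of_iso₂ (Triangle.shift_distinguished _ hT (-n))
    ((shiftFunctorCompIsoId C n (-n) (add_neg_cancel n)).app X)
  exact ⟨_, _, f', g', _, shift_mem_le hA (-n) (by omega), shift_mem_ge hB (-n) (by omega), hT'⟩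

theorem mem_le_of_forall_hom_eq_zero {X : C} {n : ℤ}
    (hX : ∀ Y ∈ t.ge (n + 1), ∀ g : X ⟶ Y, g = 0) : X ∈ t.le n := by
  obtain ⟨A, B, f, g, h, hA, hB, hT⟩ := t.exists_distTriang X n
  have hB0 : IsZero B := by
    obtain ⟨q, hq⟩ : ∃ q : A⟦(1 : ℤ)⟧ ⟶ B, 𝟙 B = h ≫ q :=
      Triangle.yoneda_exact₃ _ hT (𝟙 B) ((comp_id _).trans (hX B hB g))
    rw [IsZero.iff_id_eq_zero, hq, hom_eq_zero (shift_mem_le hA 1 le_rfl) hB (by omega) q,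
      comp_zero]
  have : IsIso f := (Triangle.isZero₃_iff_isIso₁ _ hT).1 hB0
  exact t.le_iso n A X (asIso f) hA

theorem mem_le_of_distTriang {Tr : Triangle C} (hTr : Tr ∈ distTriang C) {n : ℤ}
    (h₁ : Tr.obj₁ ∈ t.le n) (h₃ : Tr.obj₃ ∈ t.le n) : Tr.obj₂ ∈ t.le n :=
  mem_le_of_forall_hom_eq_zero fun Y hY g => by
    obtain ⟨q, rfl⟩ := Tr.yoneda_exact₂ hTr g (hom_eq_zero h₁ hY (by omega) _)
    rw [hom_eq_zero h₃ hY (by omega) q, comp_zero]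

variable (t) in
def IsLeftOrthogonalToSomeLe (W : C) : Prop :=
  ∃ b : ℤ, ∀ Z ∈ t.le b, ∀ g : W ⟶ Z, g = 0

theorem IsLeftOrthogonalToSomeLe.shift {W : C} (hW : t.IsLeftOrthogonalToSomeLe W) (k : ℤ) :
    t.IsLeftOrthogonalToSomeLe (W⟦k⟧) := by
  obtain ⟨b, hb⟩ := hW
  refine ⟨b - k, fun Z hZ g => (shiftFunctor C (-k)).map_injective ?_⟩
  let e : W ≅ (W⟦k⟧)⟦-k⟧ := ((shiftFunctorCompIsoId C k (-k) (add_neg_cancel k)).app W).symm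
  have h0 : e.hom ≫ g⟦-k⟧' = 0 := hb _ (shift_mem_le hZ (-k) (by omega)) _
  rw [Functor.map_zero]
  exact (cancel_epi e.hom).1 (by rw [h0, comp_zero])

end TStruct

end TStructure

section Compact

variable {C : Type u} [Category.{v} C] [Preadditive C] [HasShift C ℤ]
  [∀ n : ℤ, (shiftFunctor C n).Additive] [HasCoproducts.{v} C]

theorem isCompactObject_shift {E : C} (hE : IsCompactObject E) (k : ℤ) :
    IsCompactObject (E⟦k⟧) := by
  -- Transport along `Hom(E⟦k⟧, Y) ≃ Hom(E, Y⟦-k⟧)`; the shift `⟦-k⟧` commutes with coproducts.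
  intro ι _ f
  let F := shiftFunctor C (-k)
  let ε : E ≅ F.obj (E⟦k⟧) := ((shiftFunctorCompIsoId C k (-k) (add_neg_cancel k)).app E).symm
  let Φ (Y : C) : (E⟦k⟧ ⟶ Y) →+ (E ⟶ F.obj Y) := (Preadditive.leftComp _ ε.hom).comp F.mapAddHom
  have hΦ (Y : C) : Function.Bijective (Φ Y) :=
    ⟨fun a b h => F.map_injective ((cancel_epi ε.hom).1 h),
      fun y => ⟨F.preimage (ε.inv ≫ y), by simp [Φ, Preadditive.leftComp]⟩⟩
  let σ := sigmaComparison F f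
  let e₁ := DFinsupp.mapRange.addEquiv fun i => AddEquiv.ofBijective (Φ (f i)) (hΦ (f i))
  let e₂ := (Preadditive.rightComp E (inv σ)).comp (Φ (∐ f))
  have hσ : Function.Bijective (fun x : E ⟶ F.obj (∐ f) => x ≫ inv σ) :=
    ⟨fun a b h => (cancel_mono (inv σ)).1 h, fun y => ⟨y ≫ σ, by simp⟩⟩
  have he₂ : Function.Bijective e₂ := hσ.comp (hΦ _)
  have key : e₂.comp (canMap f (E⟦k⟧)) = (canMap _ E).comp e₁.toAddMonoidHom := by
    refine DirectSum.addHom_ext fun i g => ?_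
    have hof : e₁ (DirectSum.of _ i g) = DirectSum.of _ i (Φ (f i) g) :=
      DFinsupp.mapRange_single (hf := fun i => map_zero _)
    simp [hof, e₂, Φ, canMap, Preadditive.leftComp, Preadditive.rightComp, σ]
  refine (Function.Bijective.of_comp_iff' he₂ _).1 ?_
  rw [← AddMonoidHom.coe_comp, key, AddMonoidHom.coe_comp]
  exact (hE _).comp e₁.bijective

end Compact

section Noetherian

variable {C : Type u} [Category.{v} C] [Preadditive C] [HasZeroObject C] [HasShift C ℤ]
  [∀ n : ℤ, (shiftFunctor C n).Additive] [Pretriangulated C] [HasCoproducts.{v} C]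
  {t : TStruct C}

theorem shift_mem_Tminus {X : C} (hX : X ∈ Tminus t) (k : ℤ) : X⟦k⟧ ∈ Tminus t := fun n => by
  obtain ⟨E, D, f, g, h, hE, hD, hT⟩ := hX (n + k)
  exact ⟨_, _, _, _, _, isCompactObject_shift hE k, TStruct.shift_mem_le hD k (by omega),
    Triangle.shift_distinguished _ hT k⟩

theorem shift_mem_Tbc {X : C} (hX : X ∈ Tbc t) (k : ℤ) : X⟦k⟧ ∈ Tbc t := by
  obtain ⟨hX, m, hm⟩ := hX
  exact ⟨shift_mem_Tminus hX k, m - k, TStruct.shift_mem_ge hm k le_rfl⟩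

theorem NoetherianWitness.exists_distTriang {N : ℕ} (hN : NoetherianWitness t N) {X : C}
    (hX : X ∈ Tminus t) (s : ℤ) :
    ∃ (A B : C) (f : A ⟶ X) (g : X ⟶ B) (h : B ⟶ A⟦(1 : ℤ)⟧),
      A ∈ t.le (-s) ∧ B ∈ Tbc t ∩ t.ge (-N - s) ∧ Triangle.mk f g h ∈ distTriang C := by
  obtain ⟨A, B, f, g, h, ⟨-, hA⟩, ⟨hBc, hB⟩, hT⟩ := hN _ (shift_mem_Tminus hX (-s))
  obtain ⟨f', g', hT'⟩ := exists_distTriang_of_iso₂ (Triangle.shift_distinguished _ hT s)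
    ((shiftFunctorCompIsoId C (-s) s (neg_add_cancel s)).app X)
  exact ⟨_, _, f', g', _, TStruct.shift_mem_le hA s (by omega),
    ⟨shift_mem_Tbc hBc s, TStruct.shift_mem_ge hB s (by omega)⟩, hT'⟩

end Noetherian

section Tower

variable {C : Type u} [Category.{v} C] [Preadditive C] [HasZeroObject C] [HasShift C ℤ]
  [∀ n : ℤ, (shiftFunctor C n).Additive] [Pretriangulated C] {t : TStruct C}
  {X : C} {A B : ℕ → C} {f : ∀ n, A n ⟶ X} {c : ∀ n, X ⟶ B n} {h : ∀ n, B n ⟶ (A n)⟦(1 : ℤ)⟧}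

namespace TStruct

theorem eventually_bijective_comp_mor₂_of_tower (hA : ∀ n : ℕ, A n ∈ t.le (-n))
    (hT : ∀ n, Triangle.mk (f n) (c n) (h n) ∈ distTriang C) {W : C}
    (hW : t.IsLeftOrthogonalToSomeLe W) :
    ∀ᶠ n in Filter.atTop, Function.Bijective (fun x : W ⟶ X => x ≫ c n) := by
  obtain ⟨b, hb⟩ := hW
  filter_upwards [Filter.eventually_ge_atTop (-b).toNat] with n hn
  exact bijective_comp_mor₂ (hT n) (fun u => hb _ (t.le_monotone (by omega) (hA n)) u)
    (fun u => hb _ (shift_mem_le (hA n) 1 (by omega)) u)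

theorem bijective_mor₂_comp_of_tower (hA : ∀ n : ℕ, A n ∈ t.le (-n))
    (hT : ∀ n, Triangle.mk (f n) (c n) (h n) ∈ distTriang C) {i n : ℕ} (hn : i ≤ n) {Y : C}
    (hY : Y ∈ t.ge (-i + 1)) : Function.Bijective (fun y : B n ⟶ Y => c n ≫ y) :=
  bijective_mor₂_comp (hT n) (fun u => hom_eq_zero (hA n) hY (by omega) u)
    (fun u => hom_eq_zero (shift_mem_le (hA n) 1 le_rfl) hY (by omega) u)

theorem mem_le_of_tower_cone (hA : ∀ n : ℕ, A n ∈ t.le (-n))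
    (hT : ∀ n, Triangle.mk (f n) (c n) (h n) ∈ distTriang C) {p : ∀ n, B (n + 1) ⟶ B n}
    (hp : ∀ n, c (n + 1) ≫ p n = c n) {i n : ℕ} (hn : i ≤ n) {D : C} {g : B n ⟶ D}
    {h' : D ⟶ (B (n + 1))⟦(1 : ℤ)⟧} (hD : Triangle.mk (p n) g h' ∈ distTriang C) :
    D ∈ t.le (-i) := by
  have hbij (Y : C) (hY : Y ∈ t.ge (-i + 1)) :
      Function.Bijective (fun y : B n ⟶ Y => p n ≫ y) := by
    refine (Function.Bijective.of_comp_iff'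
      (bijective_mor₂_comp_of_tower hA hT (Nat.le_succ_of_le hn) hY) _).1 ?_
    convert bijective_mor₂_comp_of_tower hA hT hn hY using 1
    funext y
    simp [← hp n]
  refine mem_le_of_forall_hom_eq_zero fun Y hY ψ => ?_
  let e : (Y⟦(-1 : ℤ)⟧)⟦(1 : ℤ)⟧ ≅ Y := (shiftFunctorCompIsoId C (-1) 1 (by norm_num)).app Y
  have : ψ ≫ e.inv = 0 := eq_zero_of_bijective_mor₁_comp hD (hbij _ (t.ge_iso _ _ _ e.symm hY)).1
    (hbij _ (shift_mem_ge hY (-1) (by omega))).2 (ψ ≫ e.inv)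
  exact (cancel_mono e.inv).1 (by rw [this, zero_comp])

theorem mem_le_zero_of_tower (hA : ∀ n : ℕ, A n ∈ t.le (-n))
    (hT : ∀ n, Triangle.mk (f n) (c n) (h n) ∈ distTriang C) (hX : X ∈ t.le 0) (n : ℕ) :
    B n ∈ t.le 0 :=
  mem_le_of_distTriang (rot_of_distTriang _ (hT n)) hX (shift_mem_le (hA n) 1 (by omega))

end TStruct

end Tower

theorem statement13_general (t : TStruct T) (hwa : WeaklyApproximable t)
    (N : ℕ) (hnoeth : NoetherianWitness t N)
    (X : T) (hX : X ∈ Tminus t ∩ t.le 0) :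
    ∃ (B : ℕ → T) (p : ∀ i : ℕ, B (i + 1) ⟶ B i),
      (∀ i : ℕ, B i ∈ Tbc t ∩ t.le 0) ∧
      (∀ i : ℕ, ∃ N' : ℕ, ∀ n : ℕ, N' ≤ n →
        ∀ (D : T) (g : B n ⟶ D) (h : D ⟶ (B (n + 1))⟦(1 : ℤ)⟧),
          Triangle.mk (p n) g h ∈ (distTriang T) → D ∈ t.le (-(i : ℤ))) ∧
      ∃ (c : ∀ i : ℕ, X ⟶ B i) (_ : ∀ i : ℕ, c (i + 1) ≫ p i = c i)
        (δ : (∏ᶜ B) ⟶ X⟦(1 : ℤ)⟧),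
        Triangle.mk (Pi.lift c) (oneMinusShiftProd B p) δ ∈ (distTriang T) := by
  obtain ⟨G, a, -, -, hG, -, hGvan, -⟩ := hwa
  choose A B f c h hA hB hT using fun n : ℕ => hnoeth.exists_distTriang hX.1 (n * (N + 1))
  have hA' : ∀ n : ℕ, A n ∈ t.le (-n) := fun n => t.le_monotone (by nlinarith) (hA n)
  have hp (n : ℕ) : ∃ p : B (n + 1) ⟶ B n, c (n + 1) ≫ p = c n := by
    obtain ⟨p, hp⟩ := Triangle.yoneda_exact₂ _ (hT (n + 1)) (c n)
      (TStruct.hom_eq_zero (hA (n + 1)) (hB n).2 (by push_cast; linarith) _)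
    exact ⟨p, hp.symm⟩
  choose p hp using hp
  refine ⟨B, p, fun n => ⟨(hB n).1, TStruct.mem_le_zero_of_tower hA' hT hX.2 n⟩,
    fun i => ⟨i, fun n hn D g h' hD => TStruct.mem_le_of_tower_cone hA' hT hp hn hD⟩, c, hp, ?_⟩
  exact exists_distTriang_pi_lift_oneMinusShiftProd hp t.IsLeftOrthogonalToSomeLe
    (fun W hW k => hW.shift k)
    (fun Y hY => hG Y fun n => hY _ (TStruct.IsLeftOrthogonalToSomeLe.shift ⟨-a, hGvan⟩ n))
    (fun W hW => TStruct.eventually_bijective_comp_mor₂_of_tower hA' hT hW)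

/-- in a noetherian weakly approximable triangulated category with a
t-structure in the preferred class, every `X ∈ T^-_c ∩ T^{≤0}` is the homotopy limit of
a Cauchy inverse system in `T^b_c ∩ T^{≤0}` (Cauchy: the cones of the transition maps
are eventually in `T^{≤ −i}` for each `i`). -/
theorem statement13 (t : TStruct T)
    (hsingle : ∃ (K : T) (n : ℤ), IsCompactObject K ∧ IsGenerator K ∧
      ∀ i : ℤ, n ≤ i → ∀ f : K ⟶ K⟦i⟧, f = 0)
    (hpref : InPreferredClass t) (hwa : WeaklyApproximable t)
    (N : ℕ) (hN : 0 < N) (hnoeth : NoetherianWitness t N)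
    (X : T) (hX : X ∈ Tminus t ∩ t.le 0) :
    ∃ (B : ℕ → T) (p : ∀ i : ℕ, B (i + 1) ⟶ B i),
      (∀ i : ℕ, B i ∈ Tbc t ∩ t.le 0) ∧
      (∀ i : ℕ, ∃ N' : ℕ, ∀ n : ℕ, N' ≤ n →
        ∀ (D : T) (g : B n ⟶ D) (h : D ⟶ (B (n + 1))⟦(1 : ℤ)⟧),
          Triangle.mk (p n) g h ∈ (distTriang T) → D ∈ t.le (-(i : ℤ))) ∧
      ∃ (c : ∀ i : ℕ, X ⟶ B i) (_ : ∀ i : ℕ, c (i + 1) ≫ p i = c i)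
        (δ : (∏ᶜ B) ⟶ X⟦(1 : ℤ)⟧),
        Triangle.mk (Pi.lift c) (oneMinusShiftProd B p) δ ∈ (distTriang T) :=
  statement13_general t hwa N hnoeth X hX

end Stmt13
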